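/- arXiv:2011.09425 — 8 statements merged into one kernel-verified Lean document; each statement's English description precedes it below -/
import Mathlib

section
/- Assume ξ₁ξ₂ > 0. Then a real number g satisfies the eigenvalue degeneracy condition Δ_h = 0 if and only if g = (−ξ₁ − ξ₂ + 2√(ξ₁ξ₂))·L₁L₂ or g = (−ξ₁ − ξ₂ − 2√(ξ₁ξ₂))·L₁L₂. -/
/-!
Substituting `u = g / (L₁ L₂)` turns `Δ_h` into the monic quadratic
`u² + 2(ξ₁ + ξ₂)u + (ξ₁ - ξ₂)²`, whose discriminant `4(ξ₁ + ξ₂)² - 4(ξ₁ - ξ₂)² = 16 ξ₁ξ₂`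
is the square of `4√(ξ₁ξ₂)`; the quadratic formula gives the two roots.
-/

lemma discrim_sum_sq_sub (ξ₁ ξ₂ : ℝ) (h : 0 ≤ ξ₁ * ξ₂) :
    discrim 1 (2 * (ξ₁ + ξ₂)) ((ξ₁ - ξ₂) ^ 2) =
      (4 * Real.sqrt (ξ₁ * ξ₂)) * (4 * Real.sqrt (ξ₁ * ξ₂)) := by
  have hs : Real.sqrt (ξ₁ * ξ₂) ^ 2 = ξ₁ * ξ₂ := Real.sq_sqrt h
  rw [discrim]
  linear_combination (-16) * hs

lemma sq_add_two_mul_sum_add_sq_sub_eq_zero_iff (ξ₁ ξ₂ u : ℝ) (h : 0 ≤ ξ₁ * ξ₂) :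
    u ^ 2 + 2 * (ξ₁ + ξ₂) * u + (ξ₁ - ξ₂) ^ 2 = 0 ↔
      u = -ξ₁ - ξ₂ + 2 * Real.sqrt (ξ₁ * ξ₂) ∨ u = -ξ₁ - ξ₂ - 2 * Real.sqrt (ξ₁ * ξ₂) := by
  have hroots := quadratic_eq_zero_iff one_ne_zero (discrim_sum_sq_sub ξ₁ ξ₂ h) u
  have hplus : (-(2 * (ξ₁ + ξ₂)) + 4 * Real.sqrt (ξ₁ * ξ₂)) / (2 * 1) =
      -ξ₁ - ξ₂ + 2 * Real.sqrt (ξ₁ * ξ₂) := by ring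
  have hminus : (-(2 * (ξ₁ + ξ₂)) - 4 * Real.sqrt (ξ₁ * ξ₂)) / (2 * 1) =
      -ξ₁ - ξ₂ - 2 * Real.sqrt (ξ₁ * ξ₂) := by ring
  rwa [one_mul, ← sq, hplus, hminus] at hroots

theorem degeneracy_condition_iff_general (L₁ L₂ : ℝ)
    (hL₁ : L₁ ≠ 0) (hL₂ : L₂ ≠ 0)
    (ξ₁ ξ₂ : ℝ)
    (hpos : 0 < ξ₁ * ξ₂) (g : ℝ) :
    g ^ 2 / (L₁ ^ 2 * L₂ ^ 2) + 2 * (ξ₁ + ξ₂) * g / (L₁ * L₂) + (ξ₁ - ξ₂) ^ 2 = 0 ↔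
      g = (-ξ₁ - ξ₂ + 2 * Real.sqrt (ξ₁ * ξ₂)) * (L₁ * L₂) ∨
      g = (-ξ₁ - ξ₂ - 2 * Real.sqrt (ξ₁ * ξ₂)) * (L₁ * L₂) := by
  have hL : L₁ * L₂ ≠ 0 := mul_ne_zero hL₁ hL₂
  have hsubst : g ^ 2 / (L₁ ^ 2 * L₂ ^ 2) + 2 * (ξ₁ + ξ₂) * g / (L₁ * L₂) =
      (g / (L₁ * L₂)) ^ 2 + 2 * (ξ₁ + ξ₂) * (g / (L₁ * L₂)) := by
    ring
  rw [hsubst, sq_add_two_mul_sum_add_sq_sub_eq_zero_iff ξ₁ ξ₂ _ hpos.le,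
    div_eq_iff hL, div_eq_iff hL]

/-- Assume `ξ₁ξ₂ > 0`. Then a real number `g` satisfies the eigenvalue
degeneracy condition `Δ_h = 0` iff `g = (−ξ₁ − ξ₂ ± 2√(ξ₁ξ₂))·L₁L₂`. -/
theorem degeneracy_condition_iff (L₁ C₁ L₂ C₂ : ℝ)
    (hL₁ : L₁ ≠ 0) (hC₁ : C₁ ≠ 0) (hL₂ : L₂ ≠ 0) (hC₂ : C₂ ≠ 0)
    (ξ₁ ξ₂ : ℝ) (hξ₁ : ξ₁ = 1 / (L₁ * C₁)) (hξ₂ : ξ₂ = 1 / (L₂ * C₂))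
    (hpos : 0 < ξ₁ * ξ₂) (g : ℝ) :
    g ^ 2 / (L₁ ^ 2 * L₂ ^ 2) + 2 * (ξ₁ + ξ₂) * g / (L₁ * L₂) + (ξ₁ - ξ₂) ^ 2 = 0 ↔
      g = (-ξ₁ - ξ₂ + 2 * Real.sqrt (ξ₁ * ξ₂)) * (L₁ * L₂) ∨
      g = (-ξ₁ - ξ₂ - 2 * Real.sqrt (ξ₁ * ξ₂)) * (L₁ * L₂) :=
  degeneracy_condition_iff_general L₁ L₂ hL₁ hL₂ ξ₁ ξ₂ hpos g
end

section
/- If a real number g > 0 satisfies the eigenvalue degeneracy condition Δ_h = 0, then the circuit sign constraints hold: ξ₁ and ξ₂ have the same sign, and L₁L₂ has the opposite sign, i.e. sign ξ₁ = sign ξ₂ = −sign(L₁L₂). -/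
/-!
With `a = g / (L₁L₂)`, `Δ_h` is the discriminant of `h² + (ξ₁ + ξ₂ + a) h + ξ₁ξ₂`. If it
vanishes, the product of the roots `ξ₁ξ₂` is the square of the double root, so `ξ₁ξ₂ > 0`;
and rewriting `Δ_h = 0` as `2 (ξ₁ + ξ₂) a = -(a² + (ξ₁ - ξ₂)²) < 0` shows that `ξ₁ + ξ₂`
has the sign of `-a`, i.e. of `-L₁L₂` since `g > 0`.
-/

namespace Real

theorem sign_eq_sign_of_mul_pos {x y : ℝ} (h : 0 < x * y) : sign x = sign y := by
  rcases mul_pos_iff.mp h with ⟨hx, hy⟩ | ⟨hx, hy⟩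
  · rw [sign_of_pos hx, sign_of_pos hy]
  · rw [sign_of_neg hx, sign_of_neg hy]

theorem sign_div_of_pos {g b : ℝ} (hg : 0 < g) (hb : b ≠ 0) : sign (g / b) = sign b :=
  sign_eq_sign_of_mul_pos (by rwa [div_mul_cancel₀ g hb])

end Real

section DegenerateDiscrim

variable {a x y : ℝ}

theorem mul_nonneg_of_discrim_eq_zero (h : discrim 1 (x + y + a) (x * y) = 0) : 0 ≤ x * y := by
  have hsq : 4 * (x * y) = (x + y + a) ^ 2 := by
    rw [discrim] at h
    linear_combination -h
  linarith [sq_nonneg (x + y + a)]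

theorem add_mul_neg_of_discrim_eq_zero (ha : a ≠ 0) (h : discrim 1 (x + y + a) (x * y) = 0) :
    (x + y) * a < 0 := by
  have hsum : 2 * ((x + y) * a) = -(a ^ 2 + (x - y) ^ 2) := by
    rw [discrim] at h
    linear_combination h
  linarith [sq_pos_of_ne_zero ha, sq_nonneg (x - y)]

theorem sign_eq_sign_and_sign_eq_neg_sign_of_discrim_eq_zero (ha : a ≠ 0) (hx : x ≠ 0)
    (hy : y ≠ 0) (h : discrim 1 (x + y + a) (x * y) = 0) :
    Real.sign x = Real.sign y ∧ Real.sign x = -Real.sign a := by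
  have hxy : 0 < x * y := (mul_nonneg_of_discrim_eq_zero h).lt_of_ne (mul_ne_zero hx hy).symm
  refine ⟨Real.sign_eq_sign_of_mul_pos hxy, ?_⟩
  calc Real.sign x = Real.sign (x + y) :=
        Real.sign_eq_sign_of_mul_pos (by nlinarith [sq_nonneg x])
    _ = Real.sign (-a) :=
        Real.sign_eq_sign_of_mul_pos <| by
          linarith [add_mul_neg_of_discrim_eq_zero ha h, mul_neg (x + y) a]
    _ = -Real.sign a := Real.sign_neg

end DegenerateDiscrim

/-- If a real number `g > 0` satisfies the eigenvalue degeneracy condition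
`Δ_h = 0`, then the circuit sign constraints hold:
`sign ξ₁ = sign ξ₂ = −sign (L₁L₂)`. -/
theorem sign_constraints_of_degeneracy (L₁ C₁ L₂ C₂ : ℝ)
    (hL₁ : L₁ ≠ 0) (hC₁ : C₁ ≠ 0) (hL₂ : L₂ ≠ 0) (hC₂ : C₂ ≠ 0)
    (ξ₁ ξ₂ : ℝ) (hξ₁ : ξ₁ = 1 / (L₁ * C₁)) (hξ₂ : ξ₂ = 1 / (L₂ * C₂))
    (g : ℝ) (hg : 0 < g)
    (hΔ : g ^ 2 / (L₁ ^ 2 * L₂ ^ 2) + 2 * (ξ₁ + ξ₂) * g / (L₁ * L₂) + (ξ₁ - ξ₂) ^ 2 = 0) :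
    Real.sign ξ₁ = Real.sign ξ₂ ∧ Real.sign ξ₁ = -Real.sign (L₁ * L₂) := by
  have hL : L₁ * L₂ ≠ 0 := mul_ne_zero hL₁ hL₂
  have hξ₁0 : ξ₁ ≠ 0 := hξ₁ ▸ one_div_ne_zero (mul_ne_zero hL₁ hC₁)
  have hξ₂0 : ξ₂ ≠ 0 := hξ₂ ▸ one_div_ne_zero (mul_ne_zero hL₂ hC₂)
  have hdisc : discrim 1 (ξ₁ + ξ₂ + g / (L₁ * L₂)) (ξ₁ * ξ₂) = 0 := by
    rw [discrim, ← hΔ]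
    ring
  obtain ⟨h12, h1a⟩ := sign_eq_sign_and_sign_eq_neg_sign_of_discrim_eq_zero
    (div_ne_zero hg.ne' hL) hξ₁0 hξ₂0 hdisc
  exact ⟨h12, by rw [h1a, Real.sign_div_of_pos hg hL]⟩
end

section
/- Assume the circuit sign constraints sign ξ₁ = sign ξ₂ = −sign(L₁L₂) = σ with σ ∈ {+1,−1}, and let δ ∈ {+1,−1}. Then the special value g_δ = (√|ξ₁| + δ√|ξ₂|)²·|L₁L₂| satisfies Δ_h = 0, and for g = g_δ the quadratic χ_h is a perfect square: χ_h(h) = (h − h_δ)² for all h, where h_δ = σδ·√(|ξ₁|·|ξ₂|). -/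
lemma abs_of_sign_eq (x s : ℝ) (hs : Real.sign x = s) (h : s = 1 ∨ s = -1) :
    |x| = s * x := by
  rcases h with rfl | rfl
  · have hx : 0 < x := by
      rcases lt_trichotomy x 0 with h' | h' | h'
      · rw [Real.sign_of_neg h'] at hs; norm_num at hs
      · rw [h', Real.sign_zero] at hs; norm_num at hs
      · exact h'
    rw [abs_of_pos hx]; ring
  · have hx : x < 0 := by
      rcases lt_trichotomy x 0 with h' | h' | h'
      · exact h'
      · rw [h', Real.sign_zero] at hs; norm_num at hs
      · rw [Real.sign_of_pos h'] at hs; norm_num at hs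
    rw [abs_of_neg hx]; ring

/-- Under the circuit sign constraints with sign index `σ = ±1` and for
`δ = ±1`, the special value `g_δ = (√|ξ₁| + δ√|ξ₂|)²·|L₁L₂|` satisfies `Δ_h = 0`, and
for `g = g_δ` the quadratic `χ_h` is the perfect square `(h − h_δ)²` with
`h_δ = σδ·√(|ξ₁|·|ξ₂|)`. -/
theorem special_g_gives_perfect_square (L₁ C₁ L₂ C₂ : ℝ)
    (hL₁ : L₁ ≠ 0) (hC₁ : C₁ ≠ 0) (hL₂ : L₂ ≠ 0) (hC₂ : C₂ ≠ 0)
    (ξ₁ ξ₂ : ℝ) (hξ₁ : ξ₁ = 1 / (L₁ * C₁)) (hξ₂ : ξ₂ = 1 / (L₂ * C₂))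
    (σ δ : ℝ) (hσ : σ = 1 ∨ σ = -1) (hδ : δ = 1 ∨ δ = -1)
    (hs₁ : Real.sign ξ₁ = σ) (hs₂ : Real.sign ξ₂ = σ) (hsL : Real.sign (L₁ * L₂) = -σ)
    (gδ hδ' : ℝ)
    (hgδ : gδ = (Real.sqrt |ξ₁| + δ * Real.sqrt |ξ₂|) ^ 2 * |L₁ * L₂|)
    (hhδ : hδ' = σ * δ * Real.sqrt (|ξ₁| * |ξ₂|)) :
    gδ ^ 2 / (L₁ ^ 2 * L₂ ^ 2) + 2 * (ξ₁ + ξ₂) * gδ / (L₁ * L₂) + (ξ₁ - ξ₂) ^ 2 = 0 ∧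
    ∀ h : ℝ, h ^ 2 + (ξ₁ + ξ₂ + gδ / (L₁ * L₂)) * h + ξ₁ * ξ₂ = (h - hδ') ^ 2 := by
  set a := Real.sqrt |ξ₁| with ha
  set b := Real.sqrt |ξ₂| with hb
  have ha2 : a ^ 2 = |ξ₁| := Real.sq_sqrt (abs_nonneg _)
  have hb2 : b ^ 2 = |ξ₂| := Real.sq_sqrt (abs_nonneg _)
  have hab : Real.sqrt (|ξ₁| * |ξ₂|) = a * b := Real.sqrt_mul (abs_nonneg _) _
  have ha1 : |ξ₁| = σ * ξ₁ := abs_of_sign_eq _ _ hs₁ hσ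
  have hb1 : |ξ₂| = σ * ξ₂ := abs_of_sign_eq _ _ hs₂ hσ
  have hP : |L₁ * L₂| = -σ * (L₁ * L₂) := by
    have h' : -σ = 1 ∨ -σ = -1 := by rcases hσ with rfl | rfl <;> norm_num
    exact abs_of_sign_eq _ _ hsL h'
  have h1 : ξ₁ = σ * a ^ 2 := by
    rw [ha2, ha1]; rcases hσ with rfl | rfl <;> ring
  have h2 : ξ₂ = σ * b ^ 2 := by
    rw [hb2, hb1]; rcases hσ with rfl | rfl <;> ring
  rw [hhδ, hab, hgδ, hP, h1, h2]
  rcases hσ with rfl | rfl <;> rcases hδ with rfl | rfl <;>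
    exact ⟨by field_simp; ring, fun h => by field_simp; ring⟩
end

section
/- There exist a nonzero complex number s₀ and an invertible 4×4 complex matrix Z such that Z⁻¹𝒞Z = 𝒥(s₀), where 𝒥(s₀) is the block matrix with rows [s₀,1,0,0], [0,s₀,0,0], [0,0,−s₀,1], [0,0,0,−s₀], if and only if Δ_h = 0; moreover, in that case s₀² = −(ξ₁ + ξ₂ + g/(L₁L₂))/2. -/
open Matrix

/-- The Jordan form consisting of two 2×2 Jordan blocks with eigenvalues `s₀` and `-s₀`. -/
def jordanTwoBlocks (s₀ : ℂ) : Matrix (Fin 4) (Fin 4) ℂ :=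
  !![s₀, 1, 0, 0;
     0, s₀, 0, 0;
     0, 0, -s₀, 1;
     0, 0, 0, -s₀]

/-!
Similar matrices have the same `tr M²` and `tr M⁴`. For `𝒞` these are `-2β` and `2β² - 4ξ₁ξ₂`
with `β = ξ₁ + ξ₂ + g/(L₁L₂)`, for `𝒥(s₀)` they are `4s₀²` and `4s₀⁴`; so a similarity forces
`2s₀² = -β` and `s₀⁴ = ξ₁ξ₂`, whence `Δ_h = β² - 4ξ₁ξ₂ = 0`. Conversely, if `Δ_h = 0` then
`β ≠ 0` (as `ξ₁ξ₂ ≠ 0`), a square root `s₀` of `-β/2` is nonzero, and `𝒞` has explicit Jordan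
chains for `±s₀`.
-/

theorem Matrix.trace_pow_conj' {n R : Type*} [Fintype n] [DecidableEq n] [CommRing R]
    {Z : Matrix n n R} (hZ : IsUnit Z.det) (M : Matrix n n R) (k : ℕ) :
    trace ((Z⁻¹ * M * Z) ^ k) = trace (M ^ k) := by
  rw [← (Z.isUnit_iff_isUnit_det.2 hZ).unit_spec, ← coe_units_inv, Units.conj_pow',
    trace_units_conj']

/-- The circuit companion matrix `𝒞`, with `a = G₁/L₁` and `b = G₁/L₂`. -/
def circuitMatrix {R : Type*} [Ring R] (x₁ x₂ a b : R) : Matrix (Fin 4) (Fin 4) R :=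
  !![0, 0, 1, 0;
     0, 0, 0, 1;
     -x₁, 0, 0, a;
     0, -x₂, -b, 0]

section Traces

variable {R : Type*} [CommRing R] (x₁ x₂ a b : R)

theorem trace_circuitMatrix_sq :
    trace (circuitMatrix x₁ x₂ a b ^ 2) = -2 * (x₁ + x₂ + a * b) := by
  simp [circuitMatrix, trace, sq, Fin.sum_univ_four]
  ring

theorem trace_circuitMatrix_pow_four :
    trace (circuitMatrix x₁ x₂ a b ^ 4) = 2 * (x₁ + x₂ + a * b) ^ 2 - 4 * (x₁ * x₂) := by
  simp [circuitMatrix, trace, pow_succ, Fin.sum_univ_four]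
  ring

end Traces

theorem trace_jordanTwoBlocks_sq (s : ℂ) : trace (jordanTwoBlocks s ^ 2) = 4 * s ^ 2 := by
  simp [jordanTwoBlocks, trace, sq, Fin.sum_univ_four]
  ring

theorem trace_jordanTwoBlocks_pow_four (s : ℂ) : trace (jordanTwoBlocks s ^ 4) = 4 * s ^ 4 := by
  simp [jordanTwoBlocks, trace, pow_succ, Fin.sum_univ_four]
  ring

section Similarity

variable {x₁ x₂ a b s : ℂ} {Z : Matrix (Fin 4) (Fin 4) ℂ}

theorem two_mul_sq_eq_of_conj_eq_jordanTwoBlocks (hZ : IsUnit Z.det)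
    (hJ : Z⁻¹ * circuitMatrix x₁ x₂ a b * Z = jordanTwoBlocks s) :
    2 * s ^ 2 = -(x₁ + x₂ + a * b) := by
  have h := trace_pow_conj' hZ (circuitMatrix x₁ x₂ a b) 2
  rw [hJ, trace_jordanTwoBlocks_sq, trace_circuitMatrix_sq] at h
  linear_combination h / 2

theorem pow_four_eq_of_conj_eq_jordanTwoBlocks (hZ : IsUnit Z.det)
    (hJ : Z⁻¹ * circuitMatrix x₁ x₂ a b * Z = jordanTwoBlocks s) :
    s ^ 4 = x₁ * x₂ := by
  have h2 := two_mul_sq_eq_of_conj_eq_jordanTwoBlocks hZ hJ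
  have h4 := trace_pow_conj' hZ (circuitMatrix x₁ x₂ a b) 4
  rw [hJ, trace_jordanTwoBlocks_pow_four, trace_circuitMatrix_pow_four] at h4
  linear_combination -h4 / 4 + (2 * s ^ 2 - (x₁ + x₂ + a * b)) / 2 * h2

/-- Columns 1–2 form a Jordan chain of `circuitMatrix x₁ x₂ a b` for `s`, and columns 3–4 are
columns 1–2 with `s` replaced by `-s` and negated, a Jordan chain for `-s`. -/
def circuitJordanBasis (x₁ a s : ℂ) : Matrix (Fin 4) (Fin 4) ℂ :=
  !![a * s ^ 2, 0, -(a * s ^ 2), 0;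
     s * (x₁ + s ^ 2), s ^ 2 - x₁, s * (x₁ + s ^ 2), x₁ - s ^ 2;
     a * s ^ 3, a * s ^ 2, a * s ^ 3, -(a * s ^ 2);
     s ^ 2 * (x₁ + s ^ 2), 2 * s ^ 3, -(s ^ 2 * (x₁ + s ^ 2)), 2 * s ^ 3]

theorem det_circuitJordanBasis (x₁ a s : ℂ) :
    (circuitJordanBasis x₁ a s).det = -16 * a ^ 2 * s ^ 8 * x₁ := by
  simp [circuitJordanBasis, det_succ_row_zero, Fin.sum_univ_succ, Fin.succAbove]
  ring

theorem circuitMatrix_mul_circuitJordanBasis (hs2 : 2 * s ^ 2 = -(x₁ + x₂ + a * b))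
    (hs4 : s ^ 4 = x₁ * x₂) :
    circuitMatrix x₁ x₂ a b * circuitJordanBasis x₁ a s =
      circuitJordanBasis x₁ a s * jordanTwoBlocks s := by
  ext i j
  fin_cases i <;> fin_cases j <;>
    simp [circuitMatrix, circuitJordanBasis, jordanTwoBlocks]
  all_goals
    first
    | ring1
    | linear_combination -s ^ 3 * hs2 + s * hs4
    | linear_combination -s ^ 2 * hs2 - hs4
    | linear_combination s ^ 2 * hs2 + hs4

theorem exists_conj_eq_jordanTwoBlocks (hx₁ : x₁ ≠ 0) (ha : a ≠ 0) (hs : s ≠ 0)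
    (hs2 : 2 * s ^ 2 = -(x₁ + x₂ + a * b)) (hs4 : s ^ 4 = x₁ * x₂) :
    ∃ Z : Matrix (Fin 4) (Fin 4) ℂ, IsUnit Z.det ∧
      Z⁻¹ * circuitMatrix x₁ x₂ a b * Z = jordanTwoBlocks s := by
  have hZ : IsUnit (circuitJordanBasis x₁ a s).det := by
    rw [det_circuitJordanBasis, isUnit_iff_ne_zero]
    simp [hx₁, ha, hs]
  refine ⟨_, hZ, ?_⟩
  rw [Matrix.mul_assoc, circuitMatrix_mul_circuitJordanBasis hs2 hs4]
  exact nonsing_inv_mul_cancel_left _ _ hZ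

theorem exists_conj_eq_jordanTwoBlocks_iff (hx₁ : x₁ ≠ 0) (hx₂ : x₂ ≠ 0) (ha : a ≠ 0) :
    (∃ s : ℂ, s ≠ 0 ∧ ∃ Z : Matrix (Fin 4) (Fin 4) ℂ, IsUnit Z.det ∧
        Z⁻¹ * circuitMatrix x₁ x₂ a b * Z = jordanTwoBlocks s) ↔
      (x₁ + x₂ + a * b) ^ 2 - 4 * (x₁ * x₂) = 0 := by
  constructor
  · rintro ⟨s, -, Z, hZ, hJ⟩
    linear_combination -(2 * s ^ 2 - (x₁ + x₂ + a * b)) *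
        two_mul_sq_eq_of_conj_eq_jordanTwoBlocks hZ hJ +
      4 * pow_four_eq_of_conj_eq_jordanTwoBlocks hZ hJ
  · intro hΔ
    obtain ⟨s, hs2⟩ := IsAlgClosed.exists_pow_nat_eq (-(x₁ + x₂ + a * b) / 2) two_pos
    have hs : s ≠ 0 := by
      rintro rfl
      have hβ : x₁ + x₂ + a * b = 0 := by linear_combination 2 * hs2
      exact mul_ne_zero hx₁ hx₂ (by linear_combination -hΔ / 4 + (x₁ + x₂ + a * b) / 4 * hβ)
    refine ⟨s, hs, exists_conj_eq_jordanTwoBlocks hx₁ ha hs ?_ ?_⟩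
    · linear_combination 2 * hs2
    · linear_combination (s ^ 2 - (x₁ + x₂ + a * b) / 2) * hs2 + hΔ / 4

end Similarity

/-- There exist a nonzero `s₀ : ℂ` and an invertible `Z` with
`Z⁻¹ 𝒞 Z = 𝒥(s₀)` iff `Δ_h = 0`; moreover in that case
`s₀² = −(ξ₁ + ξ₂ + g/(L₁L₂))/2`. -/
theorem jordan_form_iff_degeneracy (L₁ C₁ L₂ C₂ G₁ : ℝ)
    (hL₁ : L₁ ≠ 0) (hC₁ : C₁ ≠ 0) (hL₂ : L₂ ≠ 0) (hC₂ : C₂ ≠ 0) (hG₁ : G₁ ≠ 0)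
    (ξ₁ ξ₂ g : ℝ)
    (hξ₁ : ξ₁ = 1 / (L₁ * C₁)) (hξ₂ : ξ₂ = 1 / (L₂ * C₂)) (hg : g = G₁ ^ 2)
    (𝒞 : Matrix (Fin 4) (Fin 4) ℂ)
    (h𝒞 : 𝒞 = !![0, 0, 1, 0;
                 0, 0, 0, 1;
                 -(ξ₁ : ℂ), 0, 0, (G₁ : ℂ) / (L₁ : ℂ);
                 0, -(ξ₂ : ℂ), -((G₁ : ℂ) / (L₂ : ℂ)), 0])
    (Δh : ℝ)
    (hΔ : Δh = g ^ 2 / (L₁ ^ 2 * L₂ ^ 2) + 2 * (ξ₁ + ξ₂) * g / (L₁ * L₂) + (ξ₁ - ξ₂) ^ 2) :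
    ((∃ s₀ : ℂ, s₀ ≠ 0 ∧ ∃ Z : Matrix (Fin 4) (Fin 4) ℂ, IsUnit Z.det ∧
        Z⁻¹ * 𝒞 * Z = jordanTwoBlocks s₀) ↔ Δh = 0) ∧
    (∀ s₀ : ℂ, s₀ ≠ 0 →
      (∃ Z : Matrix (Fin 4) (Fin 4) ℂ, IsUnit Z.det ∧ Z⁻¹ * 𝒞 * Z = jordanTwoBlocks s₀) →
      s₀ ^ 2 = -(((ξ₁ : ℂ) + (ξ₂ : ℂ) + (g : ℂ) / ((L₁ : ℂ) * (L₂ : ℂ))) / 2)) := by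
  have h𝒞 : 𝒞 = circuitMatrix (ξ₁ : ℂ) ξ₂ (G₁ / L₁) (G₁ / L₂) := h𝒞
  have hab : (G₁ / L₁ : ℂ) * (G₁ / L₂) = g / (L₁ * L₂) := by rw [hg]; push_cast; ring
  have hΔ : (Δh : ℂ) = (ξ₁ + ξ₂ + (G₁ / L₁ : ℂ) * (G₁ / L₂)) ^ 2 - 4 * (ξ₁ * ξ₂) := by
    rw [hab, hΔ]; push_cast; ring
  have hξ₁ : (ξ₁ : ℂ) ≠ 0 := by rw [hξ₁]; push_cast; simp [hL₁, hC₁]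
  have hξ₂ : (ξ₂ : ℂ) ≠ 0 := by rw [hξ₂]; push_cast; simp [hL₂, hC₂]
  have ha : (G₁ / L₁ : ℂ) ≠ 0 := by simp [hG₁, hL₁]
  subst h𝒞
  refine ⟨?_, fun s₀ _ ⟨Z, hZ, hJ⟩ => ?_⟩
  · rw [exists_conj_eq_jordanTwoBlocks_iff hξ₁ hξ₂ ha, ← hΔ, Complex.ofReal_eq_zero]
  · rw [← hab]
    linear_combination two_mul_sq_eq_of_conj_eq_jordanTwoBlocks hZ hJ / 2
end

section
/- Assume the circuit sign constraints sign ξ₁ = sign ξ₂ = −sign(L₁L₂) = σ with σ ∈ {+1,−1}, and let g be a real number with g₋₁ ≤ g ≤ g₁, where g_δ = (√|ξ₁| + δ√|ξ₂|)²·|L₁L₂| for δ = ±1. Then every complex root s of χ(s) = s⁴ + (ξ₁ + ξ₂ + g/(L₁L₂))s² + ξ₁ξ₂ satisfies |s| = (|ξ₁|·|ξ₂|)^{1/4}. -/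
/-!
Put `w = s²`. The quadratic `w² + B w + C` with `B = ξ₁ + ξ₂ + g/(L₁L₂)` and `C = ξ₁ξ₂ = |ξ₁||ξ₂|`
has real coefficients, and the bounds `g₋₁ ≤ g ≤ g₁` give `B² ≤ 4C`, since up to the
sign `σ`, `B = |ξ₁| + |ξ₂| - g/|L₁L₂|` and `g_δ/|L₁L₂| = |ξ₁| + |ξ₂| + 2δ√(|ξ₁||ξ₂|)`.
With a nonpositive discriminant the two roots are complex conjugate with product `C`, so
`|w| = C` and `|s| = C^{1/4}`.
-/

open ComplexConjugate

theorem Real.sign_mul_abs (x : ℝ) : Real.sign x * |x| = x := by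
  rcases lt_trichotomy x 0 with hx | rfl | hx
  · rw [Real.sign_of_neg hx, abs_of_neg hx]; ring
  · simp
  · rw [Real.sign_of_pos hx, abs_of_pos hx, one_mul]

theorem Real.mul_eq_abs_mul_abs_of_sign_eq {x y : ℝ} (h : Real.sign x = Real.sign y) :
    x * y = |x| * |y| := by
  rw [← abs_mul, abs_of_nonneg]
  calc 0 ≤ (Real.sign y * Real.sign y) * (|x| * |y|) :=
        mul_nonneg (mul_self_nonneg _) (mul_nonneg (abs_nonneg x) (abs_nonneg y))
    _ = (Real.sign x * |x|) * (Real.sign y * |y|) := by rw [h]; ring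
    _ = x * y := by rw [Real.sign_mul_abs, Real.sign_mul_abs]

theorem sq_add_sq_sub_le_of_mem_Icc {a b u : ℝ} (hlo : (a - b) ^ 2 ≤ u) (hhi : u ≤ (a + b) ^ 2) :
    (a ^ 2 + b ^ 2 - u) ^ 2 ≤ 4 * (a ^ 2 * b ^ 2) := by
  calc (a ^ 2 + b ^ 2 - u) ^ 2 ≤ (2 * a * b) ^ 2 := sq_le_sq' (by nlinarith) (by nlinarith)
    _ = 4 * (a ^ 2 * b ^ 2) := by ring

theorem sq_add_add_div_le_four_mul_of_sign_eq {σ ξ₁ ξ₂ P g : ℝ} (hσ : σ = 1 ∨ σ = -1)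
    (hs₁ : Real.sign ξ₁ = σ) (hs₂ : Real.sign ξ₂ = σ) (hsP : Real.sign P = -σ)
    (hlo : (√|ξ₁| - √|ξ₂|) ^ 2 * |P| ≤ g) (hhi : g ≤ (√|ξ₁| + √|ξ₂|) ^ 2 * |P|) :
    (ξ₁ + ξ₂ + g / P) ^ 2 ≤ 4 * (ξ₁ * ξ₂) := by
  have hσσ : σ * σ = 1 := by rcases hσ with rfl | rfl <;> norm_num
  have hP : 0 < |P| := abs_pos.mpr fun h ↦ by
    rw [h, Real.sign_zero] at hsP
    rcases hσ with rfl | rfl <;> norm_num at hsP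
  have hu := sq_add_sq_sub_le_of_mem_Icc ((le_div_iff₀ hP).2 hlo) ((div_le_iff₀ hP).2 hhi)
  rw [Real.sq_sqrt (abs_nonneg _), Real.sq_sqrt (abs_nonneg _)] at hu
  have hB : ξ₁ + ξ₂ + g / P = σ * (|ξ₁| + |ξ₂| - g / |P|) := by
    conv_lhs => rw [← Real.sign_mul_abs ξ₁, ← Real.sign_mul_abs ξ₂, ← Real.sign_mul_abs P]
    have hσ0 : σ ≠ 0 := left_ne_zero_of_mul_eq_one hσσ
    rw [hs₁, hs₂, hsP]
    field_simp
    linear_combination g * hσσ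
  calc (ξ₁ + ξ₂ + g / P) ^ 2 = (σ * σ) * (|ξ₁| + |ξ₂| - g / |P|) ^ 2 := by rw [hB]; ring
    _ ≤ 4 * (|ξ₁| * |ξ₂|) := by rw [hσσ, one_mul]; linarith
    _ = 4 * (ξ₁ * ξ₂) := by rw [Real.mul_eq_abs_mul_abs_of_sign_eq (hs₁.trans hs₂.symm)]

theorem Complex.normSq_eq_of_sq_add_mul_add_eq_zero {b c : ℝ} (hdisc : b ^ 2 ≤ 4 * c) {z : ℂ}
    (hz : z ^ 2 + b * z + c = 0) : Complex.normSq z = c := by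
  by_cases hreal : conj z = z
  · obtain ⟨x, rfl⟩ : ∃ x : ℝ, (x : ℂ) = z := ⟨z.re, Complex.conj_eq_iff_re.mp hreal⟩
    have hx : x ^ 2 + b * x + c = 0 := by exact_mod_cast hz
    have hvertex : (2 * x + b) ^ 2 = 0 := le_antisymm (by nlinarith) (sq_nonneg _)
    rw [Complex.normSq_ofReal]
    nlinarith [pow_eq_zero_iff two_ne_zero |>.mp hvertex]
  · -- `conj z` is the other root, so Vieta's product formula gives `z * conj z = c`.
    have hz' : conj z ^ 2 + b * conj z + c = 0 := by
      simpa using congrArg conj hz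
    have hsum : z + conj z = -b := by
      have : (z - conj z) * (z + conj z + b) = 0 := by linear_combination hz - hz'
      linear_combination (mul_eq_zero.mp this).resolve_left (sub_ne_zero.mpr (Ne.symm hreal))
    have hprod : z * conj z = c := by linear_combination -hz + z * hsum
    exact_mod_cast (Complex.mul_conj z).symm.trans hprod

theorem norm_eq_rpow_of_sq_sq_add_mul_sq_add_eq_zero {B C : ℝ} (hdisc : B ^ 2 ≤ 4 * C) {s : ℂ}
    (hs : (s ^ 2) ^ 2 + B * s ^ 2 + C = 0) : ‖s‖ = C ^ ((1 : ℝ) / 4) := by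
  have h4 : ‖s‖ ^ 4 = C := by
    rw [← Complex.normSq_eq_of_sq_add_mul_add_eq_zero hdisc hs, Complex.normSq_eq_norm_sq,
      norm_pow]
    ring
  rw [← h4, one_div]
  exact_mod_cast (Real.pow_rpow_inv_natCast (norm_nonneg s) four_ne_zero).symm

theorem roots_on_circle_general (L₁ L₂ : ℝ)
    (ξ₁ ξ₂ : ℝ)
    (σ : ℝ) (hσ : σ = 1 ∨ σ = -1)
    (hs₁ : Real.sign ξ₁ = σ) (hs₂ : Real.sign ξ₂ = σ) (hsL : Real.sign (L₁ * L₂) = -σ)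
    (g : ℝ)
    (hlo : (Real.sqrt |ξ₁| + (-1) * Real.sqrt |ξ₂|) ^ 2 * |L₁ * L₂| ≤ g)
    (hhi : g ≤ (Real.sqrt |ξ₁| + 1 * Real.sqrt |ξ₂|) ^ 2 * |L₁ * L₂|)
    (s : ℂ)
    (hroot : s ^ 4 + ((ξ₁ : ℂ) + (ξ₂ : ℂ) + (g : ℂ) / ((L₁ : ℂ) * (L₂ : ℂ))) * s ^ 2
        + (ξ₁ : ℂ) * (ξ₂ : ℂ) = 0) :
    ‖s‖ = (|ξ₁| * |ξ₂|) ^ ((1 : ℝ) / 4) := by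
  have hdisc := sq_add_add_div_le_four_mul_of_sign_eq hσ hs₁ hs₂ hsL
    (by simpa [sub_eq_add_neg] using hlo) (by simpa using hhi)
  rw [← Real.mul_eq_abs_mul_abs_of_sign_eq (hs₁.trans hs₂.symm)]
  exact norm_eq_rpow_of_sq_sq_add_mul_sq_add_eq_zero hdisc (by push_cast; linear_combination hroot)

/-- Under the circuit sign constraints, if `g₋₁ ≤ g ≤ g₁` then every complex
root `s` of `χ(s) = s⁴ + (ξ₁ + ξ₂ + g/(L₁L₂))s² + ξ₁ξ₂` satisfies
`|s| = (|ξ₁||ξ₂|)^(1/4)`. -/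
theorem roots_on_circle (L₁ C₁ L₂ C₂ : ℝ)
    (hL₁ : L₁ ≠ 0) (hC₁ : C₁ ≠ 0) (hL₂ : L₂ ≠ 0) (hC₂ : C₂ ≠ 0)
    (ξ₁ ξ₂ : ℝ) (hξ₁ : ξ₁ = 1 / (L₁ * C₁)) (hξ₂ : ξ₂ = 1 / (L₂ * C₂))
    (σ : ℝ) (hσ : σ = 1 ∨ σ = -1)
    (hs₁ : Real.sign ξ₁ = σ) (hs₂ : Real.sign ξ₂ = σ) (hsL : Real.sign (L₁ * L₂) = -σ)
    (g : ℝ)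
    (hlo : (Real.sqrt |ξ₁| + (-1) * Real.sqrt |ξ₂|) ^ 2 * |L₁ * L₂| ≤ g)
    (hhi : g ≤ (Real.sqrt |ξ₁| + 1 * Real.sqrt |ξ₂|) ^ 2 * |L₁ * L₂|)
    (s : ℂ)
    (hroot : s ^ 4 + ((ξ₁ : ℂ) + (ξ₂ : ℂ) + (g : ℂ) / ((L₁ : ℂ) * (L₂ : ℂ))) * s ^ 2
        + (ξ₁ : ℂ) * (ξ₂ : ℂ) = 0) :
    ‖s‖ = (|ξ₁| * |ξ₂|) ^ ((1 : ℝ) / 4) :=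
  roots_on_circle_general L₁ L₂ ξ₁ ξ₂ σ hσ hs₁ hs₂ hsL g hlo hhi s hroot
end

section
/- Fix EPD parameter values: reals L̊₁, C̊₁, L̊₂, C̊₂ with ξ̊₁ = 1/(L̊₁C̊₁) > 0, ξ̊₂ = 1/(L̊₂C̊₂) > 0, ξ̊₁ ≠ ξ̊₂, L̊₁L̊₂ < 0, and g̊ = −(√ξ̊₁ − √ξ̊₂)²·L̊₁L̊₂. Given real weights Δ(L₁), Δ(C₁), Δ(L₂), Δ(C₂), Δ(g), perturb the parameters as L_j(ε) = L̊_j(1 + Δ(L_j)ε), C_j(ε) = C̊_j(1 + Δ(C_j)ε), g(ε) = g̊(1 + Δ(g)ε), set ξ_j(ε) = 1/(L_j(ε)C_j(ε)), and define r(ε) = −2 + (g(ε)/(L₁(ε)L₂(ε)) + ξ₁(ε) + ξ₂(ε))/√(ξ₁(ε)ξ₂(ε)). Then r(0) = 0 and r is differentiable at ε = 0 with r′(0) = (ω₁/ω₂ − 1)(Δ(L₂) − Δ(C₁) − Δ(g)) + (ω₂/ω₁ − 1)(Δ(L₁) − Δ(C₂) − Δ(g)), where ω₁ = √ξ̊₁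 and ω₂ = √ξ̊₂. -/
/-!
Every quantity entering `r` is, up to a constant, a product of powers of the affine factors
`1 + Δ ε`, so its logarithmic derivative at `0` is a linear combination of the weights `Δ`.
Writing `r + 2 = (T + ξ₁ + ξ₂) / √(ξ₁ ξ₂)` with `T = g / (L₁ L₂)`, the EPD value of `g` makes the
three quotients at `ε = 0` equal to `-(ω₁ - ω₂)² / (ω₁ ω₂)`, `ω₁ / ω₂` and `ω₂ / ω₁`, which sum
to `2`; the derivative of `r` is the sum of these values weighted by the logarithmic derivatives
of the quotients.
-/

/-- Unlike `logDeriv f x = deriv f x / f x`, this records differentiability and involves no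
division by `f x`. -/
def HasLogDerivAt (f : ℝ → ℝ) (a x : ℝ) : Prop :=
  HasDerivAt f (f x * a) x

namespace HasLogDerivAt

variable {f h : ℝ → ℝ} {a b x : ℝ}

theorem hasDerivAt (hf : HasLogDerivAt f a x) : HasDerivAt f (f x * a) x := hf

theorem const (c x : ℝ) : HasLogDerivAt (fun _ => c) 0 x := by
  simpa [HasLogDerivAt] using hasDerivAt_const x c

theorem mul (hf : HasLogDerivAt f a x) (hh : HasLogDerivAt h b x) :
    HasLogDerivAt (fun y => f y * h y) (a + b) x :=
  (hf.hasDerivAt.mul hh.hasDerivAt).congr_deriv (by ring)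

theorem div (hf : HasLogDerivAt f a x) (hh : HasLogDerivAt h b x) (hx : h x ≠ 0) :
    HasLogDerivAt (fun y => f y / h y) (a - b) x :=
  (hf.hasDerivAt.div hh.hasDerivAt hx).congr_deriv (by field_simp)

theorem one_div (hf : HasLogDerivAt f a x) (hx : f x ≠ 0) :
    HasLogDerivAt (fun y => 1 / f y) (-a) x :=
  zero_sub a ▸ (const 1 x).div hf hx

theorem sqrt (hf : HasLogDerivAt f a x) (hx : 0 < f x) :
    HasLogDerivAt (fun y => √(f y)) (a / 2) x := by
  refine (hf.hasDerivAt.sqrt hx.ne').congr_deriv ?_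
  have hs : 0 < √(f x) := Real.sqrt_pos.2 hx
  field_simp
  rw [Real.sq_sqrt hx.le, mul_comm]

end HasLogDerivAt

theorem hasLogDerivAt_mul_one_add (c Δ : ℝ) :
    HasLogDerivAt (fun ε => c * (1 + Δ * ε)) Δ 0 := by
  simpa [HasLogDerivAt] using (((hasDerivAt_id (0 : ℝ)).const_mul Δ).const_add 1).const_mul c

theorem epd_eq_zero_and_hasDerivAt {T ξ₁ ξ₂ r : ℝ → ℝ} {t a b x ω₁ ω₂ : ℝ}
    (hω₁ : 0 < ω₁) (hω₂ : 0 < ω₂)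
    (hr : ∀ y, r y = -2 + (T y + ξ₁ y + ξ₂ y) / √(ξ₁ y * ξ₂ y))
    (hT : HasLogDerivAt T t x) (hξ₁ : HasLogDerivAt ξ₁ a x) (hξ₂ : HasLogDerivAt ξ₂ b x)
    (hTx : T x = -(ω₁ - ω₂) ^ 2) (hξ₁x : ξ₁ x = ω₁ ^ 2) (hξ₂x : ξ₂ x = ω₂ ^ 2) :
    r x = 0 ∧ HasDerivAt r ((ω₁ / ω₂ - 1) * (a - t) + (ω₂ / ω₁ - 1) * (b - t)) x := by
  have hSx : √(ξ₁ x * ξ₂ x) = ω₁ * ω₂ := by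
    rw [hξ₁x, hξ₂x, ← mul_pow, Real.sqrt_sq (by positivity)]
  have hSx_ne : √(ξ₁ x * ξ₂ x) ≠ 0 := by rw [hSx]; positivity
  have hS := (hξ₁.mul hξ₂).sqrt (by rw [hξ₁x, hξ₂x]; positivity)
  have hsplit : r = fun y => -2 + (T y / √(ξ₁ y * ξ₂ y) + ξ₁ y / √(ξ₁ y * ξ₂ y)
      + ξ₂ y / √(ξ₁ y * ξ₂ y)) := by
    funext y
    rw [hr, add_div, add_div]
  refine ⟨?_, ?_⟩
  · rw [hr, hSx, hTx, hξ₁x, hξ₂x]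
    field_simp
    ring
  · rw [hsplit]
    refine ((((hT.div hS hSx_ne).hasDerivAt.add (hξ₁.div hS hSx_ne).hasDerivAt).add
      (hξ₂.div hS hSx_ne).hasDerivAt).const_add (-2)).congr_deriv ?_
    rw [hSx, hTx, hξ₁x, hξ₂x]
    field_simp
    ring

theorem epd_perturbation_derivative_general
    (Lo₁ Co₁ Lo₂ Co₂ ξo₁ ξo₂ go : ℝ)
    (hξo₁ : ξo₁ = 1 / (Lo₁ * Co₁)) (hξo₂ : ξo₂ = 1 / (Lo₂ * Co₂))
    (hpos₁ : 0 < ξo₁) (hpos₂ : 0 < ξo₂)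
    (hgo : go = -((Real.sqrt ξo₁ - Real.sqrt ξo₂) ^ 2) * (Lo₁ * Lo₂))
    (ΔL₁ ΔC₁ ΔL₂ ΔC₂ Δg : ℝ)
    (L₁ C₁ L₂ C₂ g ξ₁ ξ₂ r : ℝ → ℝ)
    (hL₁ : ∀ ε, L₁ ε = Lo₁ * (1 + ΔL₁ * ε)) (hC₁ : ∀ ε, C₁ ε = Co₁ * (1 + ΔC₁ * ε))
    (hL₂ : ∀ ε, L₂ ε = Lo₂ * (1 + ΔL₂ * ε)) (hC₂ : ∀ ε, C₂ ε = Co₂ * (1 + ΔC₂ * ε))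
    (hg : ∀ ε, g ε = go * (1 + Δg * ε))
    (hξ₁ : ∀ ε, ξ₁ ε = 1 / (L₁ ε * C₁ ε)) (hξ₂ : ∀ ε, ξ₂ ε = 1 / (L₂ ε * C₂ ε))
    (hr : ∀ ε, r ε = -2 + (g ε / (L₁ ε * L₂ ε) + ξ₁ ε + ξ₂ ε) / Real.sqrt (ξ₁ ε * ξ₂ ε))
    (ω₁ ω₂ : ℝ) (hω₁ : ω₁ = Real.sqrt ξo₁) (hω₂ : ω₂ = Real.sqrt ξo₂) :
    r 0 = 0 ∧
    HasDerivAt r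
      ((ω₁ / ω₂ - 1) * (ΔL₂ - ΔC₁ - Δg) + (ω₂ / ω₁ - 1) * (ΔL₁ - ΔC₂ - Δg)) 0 := by
  have hLC₁ : Lo₁ * Co₁ ≠ 0 := by rintro h; simp [hξo₁, h] at hpos₁
  have hLC₂ : Lo₂ * Co₂ ≠ 0 := by rintro h; simp [hξo₂, h] at hpos₂
  have hL₁' := funext hL₁ ▸ hasLogDerivAt_mul_one_add Lo₁ ΔL₁
  have hC₁' := funext hC₁ ▸ hasLogDerivAt_mul_one_add Co₁ ΔC₁
  have hL₂' := funext hL₂ ▸ hasLogDerivAt_mul_one_add Lo₂ ΔL₂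
  have hC₂' := funext hC₂ ▸ hasLogDerivAt_mul_one_add Co₂ ΔC₂
  have hg' := funext hg ▸ hasLogDerivAt_mul_one_add go Δg
  have hξ₁' : HasLogDerivAt ξ₁ (-(ΔL₁ + ΔC₁)) 0 :=
    funext hξ₁ ▸ (hL₁'.mul hC₁').one_div (by simpa [hL₁, hC₁] using hLC₁)
  have hξ₂' : HasLogDerivAt ξ₂ (-(ΔL₂ + ΔC₂)) 0 :=
    funext hξ₂ ▸ (hL₂'.mul hC₂').one_div (by simpa [hL₂, hC₂] using hLC₂)
  have hT' := hg'.div (hL₁'.mul hL₂') (by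
    simp [hL₁, hL₂, left_ne_zero_of_mul hLC₁, left_ne_zero_of_mul hLC₂])
  have hξ₁0 : ξ₁ 0 = ω₁ ^ 2 := by
    rw [hω₁, Real.sq_sqrt hpos₁.le, hξ₁, hL₁, hC₁, hξo₁]; simp
  have hξ₂0 : ξ₂ 0 = ω₂ ^ 2 := by
    rw [hω₂, Real.sq_sqrt hpos₂.le, hξ₂, hL₂, hC₂, hξo₂]; simp
  have hT0 : g 0 / (L₁ 0 * L₂ 0) = -(ω₁ - ω₂) ^ 2 := by
    simp [hg, hL₁, hL₂, hgo, ← hω₁, ← hω₂]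
    field_simp [left_ne_zero_of_mul hLC₁, left_ne_zero_of_mul hLC₂]
  obtain ⟨hr0, hderiv⟩ := epd_eq_zero_and_hasDerivAt (hω₁ ▸ Real.sqrt_pos.2 hpos₁)
    (hω₂ ▸ Real.sqrt_pos.2 hpos₂) hr hT' hξ₁' hξ₂' hT0 hξ₁0 hξ₂0
  exact ⟨hr0, hderiv.congr_deriv (by ring)⟩

/-- Perturbing the circuit parameters multiplicatively about an EPD point,
the quantity `r(ε) = −2 + (g(ε)/(L₁(ε)L₂(ε)) + ξ₁(ε) + ξ₂(ε))/√(ξ₁(ε)ξ₂(ε))` vanishes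
at `ε = 0` and is differentiable there with
`r′(0) = (ω₁/ω₂ − 1)(Δ(L₂) − Δ(C₁) − Δ(g)) + (ω₂/ω₁ − 1)(Δ(L₁) − Δ(C₂) − Δ(g))`. -/
theorem epd_perturbation_derivative
    (Lo₁ Co₁ Lo₂ Co₂ ξo₁ ξo₂ go : ℝ)
    (hξo₁ : ξo₁ = 1 / (Lo₁ * Co₁)) (hξo₂ : ξo₂ = 1 / (Lo₂ * Co₂))
    (hpos₁ : 0 < ξo₁) (hpos₂ : 0 < ξo₂) (hne : ξo₁ ≠ ξo₂) (hLL : Lo₁ * Lo₂ < 0)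
    (hgo : go = -((Real.sqrt ξo₁ - Real.sqrt ξo₂) ^ 2) * (Lo₁ * Lo₂))
    (ΔL₁ ΔC₁ ΔL₂ ΔC₂ Δg : ℝ)
    (L₁ C₁ L₂ C₂ g ξ₁ ξ₂ r : ℝ → ℝ)
    (hL₁ : ∀ ε, L₁ ε = Lo₁ * (1 + ΔL₁ * ε)) (hC₁ : ∀ ε, C₁ ε = Co₁ * (1 + ΔC₁ * ε))
    (hL₂ : ∀ ε, L₂ ε = Lo₂ * (1 + ΔL₂ * ε)) (hC₂ : ∀ ε, C₂ ε = Co₂ * (1 + ΔC₂ * ε))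
    (hg : ∀ ε, g ε = go * (1 + Δg * ε))
    (hξ₁ : ∀ ε, ξ₁ ε = 1 / (L₁ ε * C₁ ε)) (hξ₂ : ∀ ε, ξ₂ ε = 1 / (L₂ ε * C₂ ε))
    (hr : ∀ ε, r ε = -2 + (g ε / (L₁ ε * L₂ ε) + ξ₁ ε + ξ₂ ε) / Real.sqrt (ξ₁ ε * ξ₂ ε))
    (ω₁ ω₂ : ℝ) (hω₁ : ω₁ = Real.sqrt ξo₁) (hω₂ : ω₂ = Real.sqrt ξo₂) :
    r 0 = 0 ∧
    HasDerivAt r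
      ((ω₁ / ω₂ - 1) * (ΔL₂ - ΔC₁ - Δg) + (ω₂ / ω₁ - 1) * (ΔL₁ - ΔC₂ - Δg)) 0 :=
  epd_perturbation_derivative_general Lo₁ Co₁ Lo₂ Co₂ ξo₁ ξo₂ go hξo₁ hξo₂ hpos₁ hpos₂ hgo ΔL₁ ΔC₁
    ΔL₂ ΔC₂ Δg L₁ C₁ L₂ C₂ g ξ₁ ξ₂ r hL₁ hC₁ hL₂ hC₂ hg hξ₁ hξ₂ hr ω₁ ω₂ hω₁ hω₂
end

section
/- Let ξ₁, ξ₂ > 0 be reals and for r > 0 consider the polynomial χ_r(s) = s⁴ + √(ξ₁ξ₂)(2 + r)s² + ξ₁ξ₂. There exist constants r₀ > 0 and K > 0 such that for all 0 < r < r₀: every complex root of χ_r is purely imaginary, the four roots are ±iω₊(r) and ±iω₋(r) with ω₊(r) > ω₋(r) > 0, and the frequencies satisfy |ω±(r) − ω̊(1 ± ½√r)| ≤ K·r where ω̊ = (ξ₁ξ₂)^{1/4}; consequently the relative frequency split satisfies (ω₊(r) − ω₋(r))/ω̊ = √r + O(r) as r → 0⁺. -/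
set_option maxHeartbeats 1000000


private lemma epd_aux1 (a t d r : ℝ) (ha : 0 < a) (ht0 : 0 < t) (ht2 : t^2 = r)
    (hdm : 2*t ≤ d) : a * (1 + t + t^2/4) ≤ a * (2 + r + d) / 2 := by
  nlinarith [mul_nonneg ha.le (by linarith : (0:ℝ) ≤ d - 2*t),
    mul_nonneg ha.le (sq_nonneg t)]

private lemma epd_aux2 (a t d r : ℝ) (ha : 0 < a) (hr : 0 < r) (ht0 : 0 < t) (ht2 : t^2 = r)
    (hdM : d ≤ 2*t + t^2/8) : a * (2 + r + d) / 2 ≤ a * (1 + t/2 + r)^2 := by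
  nlinarith [mul_nonneg ha.le (by linarith : (0:ℝ) ≤ 2*t + t^2/8 - d),
    mul_nonneg ha.le (sq_nonneg t), mul_nonneg ha.le (sq_nonneg r),
    mul_nonneg (mul_nonneg ha.le ht0.le) hr.le, mul_pos ha hr]

private lemma epd_aux3 (a t d r : ℝ) (ha : 0 < a) (ht0 : 0 < t) (ht2 : t^2 = r)
    (hdM : d ≤ 2*t + t^2/8) : a * (1 - t + t^2/4) ≤ a * (2 + r - d) / 2 := by
  nlinarith [mul_nonneg ha.le (by linarith : (0:ℝ) ≤ 2*t + t^2/8 - d),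
    mul_nonneg ha.le (sq_nonneg t)]

private lemma epd_aux4 (a t d r : ℝ) (ha : 0 < a) (hr : 0 < r) (ht0 : 0 < t) (ht2 : t^2 = r)
    (htlt : t < 1/4) (hdm : 2*t ≤ d) : a * (2 + r - d) / 2 ≤ a * (1 - t/2 + r)^2 := by
  nlinarith [mul_nonneg ha.le (by linarith : (0:ℝ) ≤ d - 2*t),
    mul_nonneg ha.le (sq_nonneg t), mul_nonneg ha.le (sq_nonneg r),
    mul_nonneg (mul_nonneg ha.le hr.le) (by linarith : (0:ℝ) ≤ 3/2 - t), mul_pos ha hr]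

/-- For `ξ₁, ξ₂ > 0` and the polynomial
`χ_r(s) = s⁴ + √(ξ₁ξ₂)(2 + r)s² + ξ₁ξ₂`, there are `r₀, K > 0` such that for all
`0 < r < r₀` every root is purely imaginary, the four roots are `±iω₊(r), ±iω₋(r)` with
`ω₊(r) > ω₋(r) > 0`, `|ω±(r) − ω̊(1 ± ½√r)| ≤ K·r` where `ω̊ = (ξ₁ξ₂)^(1/4)`, and
consequently `(ω₊(r) − ω₋(r))/ω̊ = √r + O(r)`. -/
theorem frequency_split_near_epd (ξ₁ ξ₂ : ℝ) (h₁ : 0 < ξ₁) (h₂ : 0 < ξ₂) :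
    ∃ r₀ > (0 : ℝ), ∃ K > (0 : ℝ), ∃ ωp ωm : ℝ → ℝ,
      ∀ r : ℝ, 0 < r → r < r₀ →
        (0 < ωm r ∧ ωm r < ωp r) ∧
        (∀ s : ℂ,
          s ^ 4 + ((Real.sqrt (ξ₁ * ξ₂) * (2 + r) : ℝ) : ℂ) * s ^ 2 + ((ξ₁ * ξ₂ : ℝ) : ℂ) = 0 ↔
            s = Complex.I * (ωp r : ℂ) ∨ s = -(Complex.I * (ωp r : ℂ)) ∨
            s = Complex.I * (ωm r : ℂ) ∨ s = -(Complex.I * (ωm r : ℂ))) ∧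
        |ωp r - (ξ₁ * ξ₂) ^ ((1 : ℝ) / 4) * (1 + Real.sqrt r / 2)| ≤ K * r ∧
        |ωm r - (ξ₁ * ξ₂) ^ ((1 : ℝ) / 4) * (1 - Real.sqrt r / 2)| ≤ K * r ∧
        |(ωp r - ωm r) / (ξ₁ * ξ₂) ^ ((1 : ℝ) / 4) - Real.sqrt r|
          ≤ 2 * K * r / (ξ₁ * ξ₂) ^ ((1 : ℝ) / 4) := by
  have hξ : 0 < ξ₁ * ξ₂ := mul_pos h₁ h₂
  set a := Real.sqrt (ξ₁ * ξ₂) with ha_def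
  have ha : 0 < a := Real.sqrt_pos.2 hξ
  have ha2 : a ^ 2 = ξ₁ * ξ₂ := Real.sq_sqrt hξ.le
  set w := Real.sqrt a with hw_def
  have hw : 0 < w := Real.sqrt_pos.2 ha
  have hw2 : w ^ 2 = a := Real.sq_sqrt ha.le
  have hwq : (ξ₁ * ξ₂) ^ ((1 : ℝ) / 4) = w := by
    rw [hw_def, ha_def, Real.sqrt_eq_rpow, Real.sqrt_eq_rpow, ← Real.rpow_mul hξ.le]
    norm_num
  refine ⟨1/16, by norm_num, w, hw,
    (fun r => Real.sqrt (a * (2 + r + Real.sqrt (r^2 + 4*r)) / 2)),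
    (fun r => Real.sqrt (a * (2 + r - Real.sqrt (r^2 + 4*r)) / 2)), ?_⟩
  intro r hr hr'
  dsimp only
  set t := Real.sqrt r with ht_def
  have ht0 : 0 < t := Real.sqrt_pos.2 hr
  have ht2 : t ^ 2 = r := Real.sq_sqrt hr.le
  have htlt : t < 1/4 := by nlinarith
  set d := Real.sqrt (r^2 + 4*r) with hd_def
  have hd0 : 0 < d := Real.sqrt_pos.2 (by nlinarith)
  have hd2 : d ^ 2 = r^2 + 4*r := Real.sq_sqrt (by nlinarith)
  have hdlt : d < 2 + r := by
    have h' : d ^ 2 < (2 + r) ^ 2 := by nlinarith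
    nlinarith
  have hdm : 2 * t ≤ d := by
    have h' : (2*t)^2 ≤ d^2 := by nlinarith
    nlinarith
  have hdM : d ≤ 2 * t + t^2 / 8 := by
    have haux : 0 ≤ t^3 * (1/4 - t) := mul_nonneg (by positivity) (by linarith)
    have h' : d ^ 2 ≤ (2*t + t^2/8)^2 := by nlinarith
    nlinarith
  set P := Real.sqrt (a * (2 + r + d) / 2) with hP_def
  set M := Real.sqrt (a * (2 + r - d) / 2) with hM_def
  have hPpos : 0 < P := Real.sqrt_pos.2 (by nlinarith)
  have hMpos : 0 < M := Real.sqrt_pos.2 (by nlinarith)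
  have hP2 : P ^ 2 = a * (2 + r + d) / 2 := Real.sq_sqrt (by nlinarith)
  have hM2 : M ^ 2 = a * (2 + r - d) / 2 := Real.sq_sqrt (by nlinarith)
  have hMP : M < P := by
    apply Real.sqrt_lt_sqrt (by nlinarith)
    nlinarith
  have hsum : P ^ 2 + M ^ 2 = a * (2 + r) := by rw [hP2, hM2]; ring
  have hprod : P ^ 2 * M ^ 2 = ξ₁ * ξ₂ := by
    rw [hP2, hM2, ← ha2]; linear_combination (-(a^2)/4) * hd2
  -- useful nonneg products
  have har : a * r = a * t^2 := by rw [ht2]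
  have hadm : 0 ≤ a * (d - 2*t) := mul_nonneg ha.le (by linarith)
  have hadM : 0 ≤ a * (2*t + t^2/8 - d) := mul_nonneg ha.le (by linarith)
  have hat2 : 0 ≤ a * t^2 := mul_nonneg ha.le (sq_nonneg t)
  have har2 : 0 ≤ a * r^2 := mul_nonneg ha.le (sq_nonneg r)
  have hatr : 0 ≤ a * r * (3/2 - t) := mul_nonneg (mul_nonneg ha.le hr.le) (by linarith)
  have hatr' : 0 ≤ a * t * r := mul_nonneg (mul_nonneg ha.le ht0.le) hr.le
  have hwr : 0 ≤ w * r := mul_nonneg hw.le hr.le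
  -- ωp estimate
  have hBp2 : (w * (1 + t/2)) ^ 2 = a * (1 + t + t^2/4) := by
    linear_combination (1 + t/2)^2 * hw2
  have hBppos : 0 < w * (1 + t/2) := mul_pos hw (by linarith)
  have hlowp : w * (1 + t/2) ≤ P := by
    have h' : (w * (1 + t/2))^2 ≤ a * (2 + r + d) / 2 := by
      rw [hBp2]; exact epd_aux1 a t d r ha ht0 ht2 hdm
    calc w * (1 + t/2) = Real.sqrt ((w * (1 + t/2))^2) := (Real.sqrt_sq hBppos.le).symm
      _ ≤ P := Real.sqrt_le_sqrt h'
  have hhighp : P ≤ w * (1 + t/2) + w * r := by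
    have heq : (w * (1 + t/2) + w * r)^2 = a * (1 + t/2 + r)^2 := by
      linear_combination (1 + t/2 + r)^2 * hw2
    have h' : a * (2 + r + d) / 2 ≤ (w * (1 + t/2) + w * r)^2 := by
      rw [heq]; exact epd_aux2 a t d r ha hr ht0 ht2 hdM
    calc P ≤ Real.sqrt ((w * (1 + t/2) + w * r)^2) := Real.sqrt_le_sqrt h'
      _ = w * (1 + t/2) + w * r := Real.sqrt_sq (by linarith)
  have hap : |P - w * (1 + t/2)| ≤ w * r := by
    rw [abs_le]; constructor <;> linarith
  -- ωm estimate
  have hBm2 : (w * (1 - t/2)) ^ 2 = a * (1 - t + t^2/4) := by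
    linear_combination (1 - t/2)^2 * hw2
  have hBmpos : 0 < w * (1 - t/2) := mul_pos hw (by linarith)
  have hlowm : w * (1 - t/2) ≤ M := by
    have h' : (w * (1 - t/2))^2 ≤ a * (2 + r - d) / 2 := by
      rw [hBm2]; exact epd_aux3 a t d r ha ht0 ht2 hdM
    calc w * (1 - t/2) = Real.sqrt ((w * (1 - t/2))^2) := (Real.sqrt_sq hBmpos.le).symm
      _ ≤ M := Real.sqrt_le_sqrt h'
  have hhighm : M ≤ w * (1 - t/2) + w * r := by
    have heq : (w * (1 - t/2) + w * r)^2 = a * (1 - t/2 + r)^2 := by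
      linear_combination (1 - t/2 + r)^2 * hw2
    have h' : a * (2 + r - d) / 2 ≤ (w * (1 - t/2) + w * r)^2 := by
      rw [heq]; exact epd_aux4 a t d r ha hr ht0 ht2 htlt hdm
    calc M ≤ Real.sqrt ((w * (1 - t/2) + w * r)^2) := Real.sqrt_le_sqrt h'
      _ = w * (1 - t/2) + w * r := Real.sqrt_sq (by linarith)
  have ham : |M - w * (1 - t/2)| ≤ w * r := by
    rw [abs_le]; constructor <;> linarith
  refine ⟨⟨hMpos, hMP⟩, ?_, by rw [hwq]; exact hap, by rw [hwq]; exact ham, ?_⟩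
  · -- root characterization
    intro s
    have e1 : ((P : ℝ) : ℂ)^2 + ((M : ℝ) : ℂ)^2 = ((a * (2 + r) : ℝ) : ℂ) := by
      exact_mod_cast congrArg Complex.ofReal hsum
    have e2 : ((P : ℝ) : ℂ)^2 * ((M : ℝ) : ℂ)^2 = ((ξ₁ * ξ₂ : ℝ) : ℂ) := by
      exact_mod_cast congrArg Complex.ofReal hprod
    have sq1 : (s - Complex.I * (P:ℂ)) * (s + Complex.I * (P:ℂ)) = s^2 + (P:ℂ)^2 := by
      linear_combination (-((P:ℂ)^2)) * Complex.I_sq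
    have sq2 : (s - Complex.I * (M:ℂ)) * (s + Complex.I * (M:ℂ)) = s^2 + (M:ℂ)^2 := by
      linear_combination (-((M:ℂ)^2)) * Complex.I_sq
    have key : s ^ 4 + ((a * (2 + r) : ℝ) : ℂ) * s ^ 2 + ((ξ₁ * ξ₂ : ℝ) : ℂ)
        = (s - Complex.I * (P:ℂ)) * (s + Complex.I * (P:ℂ)) *
          ((s - Complex.I * (M:ℂ)) * (s + Complex.I * (M:ℂ))) := by
      rw [sq1, sq2, ← e1, ← e2]; ring
    rw [key]
    simp only [mul_eq_zero, sub_eq_zero, add_eq_zero_iff_eq_neg]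
    tauto
  · -- combined estimate
    have key : (P - M)/w - t = ((P - w * (1 + t/2)) - (M - w * (1 - t/2)))/w := by
      field_simp; ring
    rw [hwq, key, abs_div, abs_of_pos hw]
    have h1 := abs_le.1 hap
    have h2 := abs_le.1 ham
    have h3 : |(P - w * (1 + t/2)) - (M - w * (1 - t/2))| ≤ 2 * w * r :=
      abs_le.2 ⟨by linarith, by linarith⟩
    exact (div_le_div_iff_of_pos_right hw).mpr h3
end

section
/- Let A(ε) be an n×n complex-matrix-valued function analytic in ε near ε = 0, and let λ₀ be an eigenvalue of A(0) whose algebraic multiplicity (as a root of the characteristic polynomial of A(0)) is m. Then the following are equivalent: (i) the partial derivative with respect to ε of det(λI − A(ε)) at (ε, λ) = (0, λ₀) is nonzero; (ii) the eigenvalue λ₀ of A(0) has geometric multiplicity 1 (so its Jordan structure is a single m×m Jordan block), and there exist a nonzero vector u₀ with A(0)u₀ = λ₀u₀ and a nonzero vector v₀ with A(0)*v₀ = conj(λ₀)v₀ such that the inner product ⟨v₀, A′(0)u₀⟩ ≠ 0, where A′(0) is the derivative of A(ε) at ε = 0. -/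
open Matrix

attribute [local instance] Matrix.normedAddCommGroup Matrix.normedSpace

/-!
Jacobi's formula gives `∂_ε det(λ₀ - A ε) = -tr(adj(λ₀ - A 0) * A'(0))` at `ε = 0`. For the singular
matrix `B = λ₀ - A 0`, the adjugate vanishes when `dim ker B ≥ 2`, while when `dim ker B = 1` it is a
nonzero multiple of `u yᵀ` for any nonzero `u ∈ ker B` and `y ∈ ker Bᵀ`; then
`tr(adj B * A'(0))` is a nonzero multiple of `yᵀ A'(0) u`, and `y = conj v₀` for a left eigenvector
`v₀` of `A 0`.
-/

open Module

theorem Submodule.exists_smul_eq_of_finrank_eq_one {K V : Type*} [DivisionRing K] [AddCommGroup V]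
    [Module K V] {W : Submodule K V} (hW : finrank K W = 1) {u c : V} (hu : u ∈ W) (hu0 : u ≠ 0)
    (hc : c ∈ W) : ∃ a : K, a • u = c := by
  obtain ⟨a, ha⟩ := (finrank_eq_one_iff_of_nonzero' (⟨u, hu⟩ : W) (by simpa using hu0)).1 hW ⟨c, hc⟩
  exact ⟨a, congrArg Subtype.val ha⟩

namespace Matrix

open LinearMap

section Jacobi

variable {𝕜 ι : Type*} [NontriviallyNormedField 𝕜] [Fintype ι] [DecidableEq ι]

def detRowContinuousMultilinear : ContinuousMultilinearMap 𝕜 (fun _ : ι => ι → 𝕜) 𝕜 :=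
  ⟨(detRowAlternating : (ι → 𝕜) [⋀^ι]→ₗ[𝕜] 𝕜).toMultilinearMap,
    (continuous_id (X := Matrix ι ι 𝕜)).matrix_det⟩

theorem sum_det_updateRow_eq_trace_adjugate_mul {R : Type*} [CommRing R] (A B : Matrix ι ι R) :
    ∑ i, (A.updateRow i (B i)).det = trace (adjugate A * B) := by
  simp_rw [← cramer_transpose_apply, cramer_eq_adjugate_mulVec, ← adjugate_transpose]
  rw [trace_mul_comm]
  simp [trace, mul_apply, mulVec, dotProduct, mul_comm]

theorem hasDerivAt_det {M : 𝕜 → Matrix ι ι 𝕜} {M' : Matrix ι ι 𝕜} {x : 𝕜}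
    (h : HasDerivAt M M' x) :
    HasDerivAt (fun t => (M t).det) (trace (adjugate (M x) * M')) x := by
  have hrows := (detRowContinuousMultilinear.hasFDerivAt (M x)).comp_hasDerivAt x h
  refine (hrows : HasDerivAt (fun t => (M t).det) _ x).congr_deriv ?_
  exact (ContinuousMultilinearMap.linearDeriv_apply _ _ _).trans
    (sum_det_updateRow_eq_trace_adjugate_mul _ _)

end Jacobi

section Adjugate

variable {K ι : Type*} [Field K] [Fintype ι]

theorem finrank_ker_mulVecLin_transpose (B : Matrix ι ι K) :
    finrank K (ker Bᵀ.mulVecLin) = finrank K (ker B.mulVecLin) := by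
  have h := finrank_range_add_finrank_ker B.mulVecLin
  have hT := finrank_range_add_finrank_ker Bᵀ.mulVecLin
  have hrank : Bᵀ.rank = B.rank := rank_transpose B
  rw [rank, rank] at hrank
  omega

theorem trace_vecMulVec_mul {R : Type*} [CommSemiring R] (u y : ι → R) (C : Matrix ι ι R) :
    trace (vecMulVec u y * C) = y ⬝ᵥ C *ᵥ u := by
  rw [vecMulVec_mul, trace_vecMulVec, dotProduct_comm, dotProduct_mulVec]

variable [DecidableEq ι] {B : Matrix ι ι K}

theorem adjugate_eq_zero_of_two_le_finrank_ker (h : 2 ≤ finrank K (ker B.mulVecLin)) :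
    adjugate B = 0 := by
  ext i j
  let π : ker B.mulVecLin →ₗ[K] K := (proj i).comp (ker B.mulVecLin).subtype
  obtain ⟨c, hci, hc0⟩ := (Submodule.ne_bot_iff _).1 <|
    π.ker_ne_bot_of_finrank_lt (by rw [finrank_self]; omega)
  have hBc : B *ᵥ c = 0 := c.2
  rw [adjugate_apply, zero_apply, ← exists_mulVec_eq_zero_iff]
  refine ⟨c, by simpa using hc0, ?_⟩
  rw [updateRow_mulVec, single_one_dotProduct, hBc]
  exact Function.update_eq_self_iff.2 hci

theorem adjugate_ne_zero_of_finrank_ker_eq_one (h : finrank K (ker B.mulVecLin) = 1) :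
    adjugate B ≠ 0 := by
  obtain ⟨u, hu, hu0⟩ := (Submodule.ne_bot_iff (ker B.mulVecLin)).1 fun h0 => by
    rw [h0, finrank_bot] at h
    exact zero_ne_one h
  obtain ⟨i, hi⟩ : ∃ i, u i ≠ 0 := Function.ne_iff.1 hu0
  obtain ⟨y, hy0, hy⟩ := exists_vecMul_eq_zero_iff.2 (exists_mulVec_eq_zero_iff.1 ⟨u, hu0, hu⟩)
  obtain ⟨j, hj⟩ : ∃ j, y j ≠ 0 := Function.ne_iff.1 hy0
  intro hadj
  obtain ⟨c, hc0, hc⟩ : ∃ c ≠ 0, B.updateRow j (Pi.single i 1) *ᵥ c = 0 := by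
    rw [exists_mulVec_eq_zero_iff, ← adjugate_apply, hadj, zero_apply]
  rw [updateRow_mulVec, single_one_dotProduct, Function.update_eq_iff] at hc
  obtain ⟨hci, hrows⟩ := hc
  -- row `j` of `B` is a combination of the others, since `y ᵥ* B = 0` and `y j ≠ 0`
  have hBcj : (B *ᵥ c) j = 0 := by
    have hdot : y ⬝ᵥ (B *ᵥ c) = y j * (B *ᵥ c) j :=
      Finset.sum_eq_single j (fun k _ hk => by simp [hrows k hk]) (by simp)
    rw [dotProduct_mulVec, hy, zero_dotProduct] at hdot
    exact (mul_eq_zero.1 hdot.symm).resolve_left hj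
  have hBc : B *ᵥ c = 0 := funext fun k => by
    rcases eq_or_ne k j with rfl | hk
    · exact hBcj
    · exact hrows k hk
  obtain ⟨a, rfl⟩ := Submodule.exists_smul_eq_of_finrank_eq_one h hu hu0 hBc
  have ha : a = 0 := by simpa [hi] using hci
  simp [ha] at hc0

theorem finrank_ker_eq_one_of_adjugate_ne_zero (hdet : B.det = 0) (h : adjugate B ≠ 0) :
    finrank K (ker B.mulVecLin) = 1 := by
  obtain ⟨u, hu0, hu⟩ := exists_mulVec_eq_zero_iff.2 hdet
  have hpos : 0 < finrank K (ker B.mulVecLin) :=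
    finrank_pos_iff_exists_ne_zero.2 ⟨⟨u, hu⟩, ne_of_apply_ne Subtype.val hu0⟩
  have hle : finrank K (ker B.mulVecLin) < 2 := by
    by_contra! h2
    exact h (adjugate_eq_zero_of_two_le_finrank_ker h2)
  omega

theorem adjugate_eq_smul_vecMulVec (h : finrank K (ker B.mulVecLin) = 1) {u y : ι → K}
    (hu : B *ᵥ u = 0) (hu0 : u ≠ 0) (hy : Bᵀ *ᵥ y = 0) (hy0 : y ≠ 0) :
    ∃ c : K, c ≠ 0 ∧ adjugate B = c • vecMulVec u y := by
  have hdet : B.det = 0 := exists_mulVec_eq_zero_iff.1 ⟨u, hu0, hu⟩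
  have hcol : ∀ j, ∃ a : K, a • u = fun i => adjugate B i j := fun j =>
    Submodule.exists_smul_eq_of_finrank_eq_one h (mem_ker.2 hu) hu0 <| mem_ker.2 <|
      funext fun r => by
        simpa [hdet, mul_apply, mulVec, dotProduct] using congrFun₂ (mul_adjugate B) r j
  choose w hw using hcol
  have hadj : adjugate B = vecMulVec u w := by
    ext i j
    rw [vecMulVec_apply, ← congrFun (hw j) i, Pi.smul_apply, smul_eq_mul, mul_comm]
  have hw_left : Bᵀ *ᵥ w = 0 := by
    have := adjugate_mul B
    rw [hdet, zero_smul, hadj, vecMulVec_mul, vecMulVec_eq_zero] at this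
    rw [mulVec_transpose]
    exact this.resolve_left hu0
  obtain ⟨c, rfl⟩ := Submodule.exists_smul_eq_of_finrank_eq_one
    ((finrank_ker_mulVecLin_transpose B).trans h) (mem_ker.2 hy) hy0 (mem_ker.2 hw_left)
  refine ⟨c, fun hc => adjugate_ne_zero_of_finrank_ker_eq_one h ?_, ?_⟩
  · rw [hadj, hc, zero_smul, vecMulVec_zero]
  · rw [hadj, vecMulVec_smul]

theorem trace_adjugate_mul_ne_zero_iff (hdet : B.det = 0) (C : Matrix ι ι K) :
    trace (adjugate B * C) ≠ 0 ↔ finrank K (ker B.mulVecLin) = 1 ∧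
      ∃ u, u ≠ 0 ∧ B *ᵥ u = 0 ∧ ∃ y, y ≠ 0 ∧ Bᵀ *ᵥ y = 0 ∧ y ⬝ᵥ C *ᵥ u ≠ 0 := by
  constructor
  · intro htr
    have hfr := finrank_ker_eq_one_of_adjugate_ne_zero hdet fun h0 => htr <| by
      rw [h0, zero_mul, trace_zero]
    obtain ⟨u, hu0, hu⟩ := exists_mulVec_eq_zero_iff.2 hdet
    obtain ⟨y, hy0, hy⟩ := exists_vecMul_eq_zero_iff.2 hdet
    rw [← mulVec_transpose] at hy
    obtain ⟨c, -, hc⟩ := adjugate_eq_smul_vecMulVec hfr hu hu0 hy hy0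
    refine ⟨hfr, u, hu0, hu, y, hy0, hy, fun h0 => htr ?_⟩
    rw [hc, smul_mul, trace_smul, trace_vecMulVec_mul, h0, smul_zero]
  · rintro ⟨hfr, u, hu0, hu, y, hy0, hy, hdot⟩
    obtain ⟨c, hc0, hc⟩ := adjugate_eq_smul_vecMulVec hfr hu hu0 hy hy0
    rw [hc, smul_mul, trace_smul, trace_vecMulVec_mul, smul_eq_mul]
    exact mul_ne_zero hc0 hdot

end Adjugate

section Eigenvector

variable {R ι : Type*} [CommRing R] [Fintype ι] [DecidableEq ι]

theorem smul_one_sub_mulVec_eq_zero_iff (A : Matrix ι ι R) (μ : R) (u : ι → R) :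
    (μ • 1 - A) *ᵥ u = 0 ↔ A *ᵥ u = μ • u := by
  rw [sub_mulVec, smul_mulVec, one_mulVec, sub_eq_zero, eq_comm]

theorem transpose_smul_one_sub_mulVec_star_eq_zero_iff [StarRing R] (A : Matrix ι ι R) (μ : R)
    (v : ι → R) : (μ • 1 - A)ᵀ *ᵥ star v = 0 ↔ Aᴴ *ᵥ v = star μ • v := by
  rw [transpose_sub, transpose_smul, transpose_one, smul_one_sub_mulVec_eq_zero_iff,
    ← star_inj, star_mulVec, star_smul, star_star,
    conjTranspose_transpose_eq_transpose_conjTranspose, vecMul_transpose]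

end Eigenvector

end Matrix

/-- Welters / Lidskii: For an analytic matrix family `A(ε)` and an
eigenvalue `λ₀` of `A(0)` of algebraic multiplicity `m`, the following are equivalent:
(i) `∂/∂ε det(λ₀I − A(ε))|_{ε=0} ≠ 0`;
(ii) `λ₀` has geometric multiplicity 1 (single `m×m` Jordan block) and there exist
eigenvectors `u₀` of `A(0)` (for `λ₀`) and `v₀` of `A(0)*` (for `conj λ₀`) with
`⟨v₀, A′(0)u₀⟩ ≠ 0`. -/
theorem nonderogatory_eigenvalue_perturbation (n : ℕ)
    (A : ℂ → Matrix (Fin n) (Fin n) ℂ) (hA : AnalyticAt ℂ A 0)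
    (lam₀ : ℂ) (m : ℕ) (hm : 0 < m)
    (hmult : ((A 0).charpoly).rootMultiplicity lam₀ = m) :
    deriv (fun ε : ℂ => (lam₀ • (1 : Matrix (Fin n) (Fin n) ℂ) - A ε).det) 0 ≠ 0 ↔
      (Module.finrank ℂ
          (LinearMap.ker (A 0 - lam₀ • (1 : Matrix (Fin n) (Fin n) ℂ)).mulVecLin) = 1 ∧
        ∃ u₀ : Fin n → ℂ, u₀ ≠ 0 ∧ (A 0).mulVec u₀ = lam₀ • u₀ ∧
          ∃ v₀ : Fin n → ℂ, v₀ ≠ 0 ∧ (A 0)ᴴ.mulVec v₀ = (starRingEnd ℂ lam₀) • v₀ ∧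
            star v₀ ⬝ᵥ (deriv A 0).mulVec u₀ ≠ 0) := by
  have hdet : (lam₀ • (1 : Matrix (Fin n) (Fin n) ℂ) - A 0).det = 0 := by
    rw [smul_one_eq_diagonal, ← scalar_apply, ← Matrix.eval_charpoly]
    exact (Polynomial.rootMultiplicity_pos (charpoly_monic _).ne_zero).1 (hmult ▸ hm)
  have hM : HasDerivAt (fun ε => lam₀ • (1 : Matrix (Fin n) (Fin n) ℂ) - A ε) (-deriv A 0) 0 :=
    hA.differentiableAt.hasDerivAt.const_sub _
  have hderiv : deriv (fun ε => (lam₀ • (1 : Matrix (Fin n) (Fin n) ℂ) - A ε).det) 0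
      = -trace (adjugate (lam₀ • 1 - A 0) * deriv A 0) := by
    rw [(hasDerivAt_det hM).deriv, mul_neg, trace_neg]
  set B := lam₀ • (1 : Matrix (Fin n) (Fin n) ℂ) - A 0
  have hker : LinearMap.ker (A 0 - lam₀ • (1 : Matrix (Fin n) (Fin n) ℂ)).mulVecLin =
      LinearMap.ker B.mulVecLin := by
    ext c
    simp only [LinearMap.mem_ker, mulVecLin_apply, B, sub_mulVec, smul_mulVec, one_mulVec,
      sub_eq_zero]
    exact eq_comm
  rw [hderiv, neg_ne_zero, hker, trace_adjugate_mul_ne_zero_iff hdet]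
  refine and_congr_right fun _ => exists_congr fun u => and_congr_right fun _ =>
    and_congr (smul_one_sub_mulVec_eq_zero_iff _ _ _) ?_
  refine star_involutive.surjective.exists.trans (exists_congr fun v => ?_)
  rw [star_ne_zero, transpose_smul_one_sub_mulVec_star_eq_zero_iff, Complex.star_def]
end
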